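/- For all C ≥ 0 there exists D ≥ 0 with the following property. Let X be a geodesic metric space and let A ⊆ X be a C-strongly contracting subset satisfying Gromov's 4-point condition with constant C. Then e(A) is a D-strongly contracting subset of the injective hull E(X). -/
import Mathlib


universe u

/-- A metric space is *injective* (hyperconvex) if every family of closed balls that
pairwise intersect (i.e. `dist xᵢ xⱼ ≤ rᵢ + rⱼ` for `i ≠ j`) has a common point.
Families are encoded as sets of (center, radius) pairs. -/
def IsInjectiveSpace (X : Type u) [MetricSpace X] : Prop :=
  ∀ s : Set (X × ℝ), (∀ p ∈ s, 0 ≤ p.2) →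
    (∀ p ∈ s, ∀ q ∈ s, p ≠ q → dist p.1 q.1 ≤ p.2 + q.2) →
    ∃ z : X, ∀ p ∈ s, dist z p.1 ≤ p.2

/-- `γ : [0, dist x y] → X` is a geodesic from `x` to `y`. -/
def IsGeodesicSegment {X : Type u} [MetricSpace X] (γ : ℝ → X) (x y : X) : Prop :=
  γ 0 = x ∧ γ (dist x y) = y ∧
    ∀ s ∈ Set.Icc (0 : ℝ) (dist x y), ∀ t ∈ Set.Icc (0 : ℝ) (dist x y),
      dist (γ s) (γ t) = |s - t|

/-- A metric space is geodesic if any two points are joined by a geodesic. -/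
def IsGeodesicSpace (X : Type u) [MetricSpace X] : Prop :=
  ∀ x y : X, ∃ γ : ℝ → X, IsGeodesicSegment γ x y

/-- `γ` restricted to `I ⊆ ℝ` is a `(k, c)`-quasi-geodesic. -/
def IsQuasiGeodesicOn {X : Type u} [MetricSpace X] (k c : ℝ) (γ : ℝ → X) (I : Set ℝ) : Prop :=
  ∀ s ∈ I, ∀ t ∈ I,
    (1 / k) * |s - t| - c ≤ dist (γ s) (γ t) ∧ dist (γ s) (γ t) ≤ k * |s - t| + c

/-- A subset `Y` is `M`-Morse if every `(k, c)`-quasi-geodesic with endpoints on `Y`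
stays in the `M k c`-neighborhood of `Y`. -/
def IsMorse {X : Type u} [MetricSpace X] (M : ℝ → ℝ → ℝ) (Y : Set X) : Prop :=
  ∀ k c : ℝ, 1 ≤ k → 0 ≤ c → ∀ a b : ℝ, ∀ γ : ℝ → X,
    IsQuasiGeodesicOn k c γ (Set.Icc a b) → γ a ∈ Y → γ b ∈ Y →
    ∀ t ∈ Set.Icc a b, Metric.infDist (γ t) Y ≤ M k c

/-- The coarse closest-point projection `π_Y(x) = {y ∈ Y : d(x,y) ≤ d(x,Y) + 1}`. -/
def coarseProj {X : Type u} [MetricSpace X] (Y : Set X) (x : X) : Set X :=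
  {y | y ∈ Y ∧ dist x y ≤ Metric.infDist x Y + 1}

/-- `Y` is `D`-strongly contracting: for every closed ball `B` disjoint from `Y`,
the projection `π_Y(B)` has diameter at most `D`. -/
def IsStronglyContracting {X : Type u} [MetricSpace X] (D : ℝ) (Y : Set X) : Prop :=
  ∀ (c : X) (r : ℝ), Disjoint (Metric.closedBall c r) Y →
    ∀ x₁ ∈ Metric.closedBall c r, ∀ x₂ ∈ Metric.closedBall c r,
      ∀ y₁ ∈ coarseProj Y x₁, ∀ y₂ ∈ coarseProj Y x₂, dist y₁ y₂ ≤ D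

/-- `γ : I → X` is an `(L; D; k, c)`-local strongly contracting quasi-geodesic:
every subsegment of length at most `L` is a `(k,c)`-quasi-geodesic with
`D`-strongly contracting image. -/
def IsLocalSCQuasiGeodesic {X : Type u} [MetricSpace X] (L D k c : ℝ) (γ : ℝ → X)
    (I : Set ℝ) : Prop :=
  ∀ s t : ℝ, s ≤ t → Set.Icc s t ⊆ I → t - s ≤ L →
    IsQuasiGeodesicOn k c γ (Set.Icc s t) ∧ IsStronglyContracting D (γ '' Set.Icc s t)

/-- `γ : I → X` is a `(B; M; k, c)`-local Morse quasi-geodesic. -/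
def IsLocalMorseQuasiGeodesic {X : Type u} [MetricSpace X] (B : ℝ) (M : ℝ → ℝ → ℝ)
    (k c : ℝ) (γ : ℝ → X) (I : Set ℝ) : Prop :=
  ∀ s t : ℝ, s ≤ t → Set.Icc s t ⊆ I → t - s ≤ B →
    IsQuasiGeodesicOn k c γ (Set.Icc s t) ∧ IsMorse M (γ '' Set.Icc s t)

/-- The Morse local-to-global property. -/
def HasMorseLocalToGlobal (X : Type u) [MetricSpace X] : Prop :=
  ∀ (M : ℝ → ℝ → ℝ) (k c : ℝ), 1 ≤ k → 0 ≤ c →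
    ∃ (B : ℝ) (M' : ℝ → ℝ → ℝ) (k' c' : ℝ), 0 ≤ B ∧ 1 ≤ k' ∧ 0 ≤ c' ∧
      ∀ I : Set ℝ, I.OrdConnected → ∀ γ : ℝ → X,
        IsLocalMorseQuasiGeodesic B M k c γ I →
        IsQuasiGeodesicOn k' c' γ I ∧ IsMorse M' (γ '' I)

/-- `A` satisfies Gromov's 4-point condition with constant `C`. -/
def Gromov4 {X : Type u} [MetricSpace X] (C : ℝ) (A : Set X) : Prop :=
  ∀ x ∈ A, ∀ y ∈ A, ∀ w ∈ A, ∀ z ∈ A,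
    dist x y + dist w z ≤ max (dist x z + dist w y) (dist x w + dist y z) + C


/-- The set of metric forms on `X`: functions with `d(x,y) ≤ f x + f y`. -/
def metricForm (X : Type u) [MetricSpace X] : Set (X → ℝ) :=
  {f | ∀ x y, dist x y ≤ f x + f y}

/-- The injective hull `E(X)`: minimal metric forms (w.r.t. the pointwise order). -/
def injectiveHull (X : Type u) [MetricSpace X] : Set (X → ℝ) :=
  {f | f ∈ metricForm X ∧ ∀ g ∈ metricForm X, (∀ x, g x ≤ f x) → g = f}

namespace InjHull

variable {X : Type u} [MetricSpace X]

lemma form_nonneg {f : X → ℝ} (hf : f ∈ metricForm X) (x : X) : 0 ≤ f x := by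
  have h := hf x x
  simp only [dist_self] at h
  linarith

lemma exists_near {f : X → ℝ} (hf : f ∈ injectiveHull X) (x : X) {ε : ℝ} (hε : 0 < ε) :
    ∃ y, f x + f y ≤ dist x y + ε := by
  by_contra hcon
  push_neg at hcon
  classical
  set g : X → ℝ := fun z => if z = x then f x - ε / 2 else f z with hgdef
  have hgeq : g x = f x - ε / 2 := by simp [hgdef]
  have hgne : ∀ z, z ≠ x → g z = f z := by
    intro z hz
    simp [hgdef, hz]
  have hgm : g ∈ metricForm X := by
    intro y z
    by_cases hy : y = x
    · by_cases hz : z = x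
      · rw [hy, hz, hgeq]
        have hk := hcon x
        simp only [dist_self] at hk ⊢
        linarith
      · rw [hy, hgeq, hgne z hz]
        have hk := hcon z
        linarith
    · by_cases hz : z = x
      · rw [hz, hgne y hy, hgeq, dist_comm]
        have hk := hcon y
        linarith
      · rw [hgne y hy, hgne z hz]
        exact hf.1 y z
  have hle : ∀ z, g z ≤ f z := by
    intro z
    by_cases hz : z = x
    · rw [hz, hgeq]
      linarith
    · rw [hgne z hz]
  have heq := hf.2 g hgm hle
  have hx := congrFun heq x
  rw [hgeq] at hx
  linarith

lemma le_dist_add {f : X → ℝ} (hf : f ∈ injectiveHull X) (x y : X) :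
    f x ≤ dist x y + f y := by
  by_contra hcon
  push_neg at hcon
  have hε : 0 < (f x - (dist x y + f y)) / 2 := by linarith
  obtain ⟨z, hz⟩ := exists_near hf x hε
  have h1 := hf.1 y z
  have h2 := dist_triangle x y z
  linarith

lemma dist_bound {f g : X → ℝ} (hf : f ∈ injectiveHull X) (hg : g ∈ injectiveHull X)
    (x x₀ : X) : |f x - g x| ≤ f x₀ + g x₀ := by
  rw [abs_sub_le_iff]
  constructor
  · have h1 := le_dist_add hf x x₀
    have h2 := hg.1 x x₀
    linarith
  · have h1 := le_dist_add hg x x₀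
    have h2 := hf.1 x x₀
    linarith

noncomputable def hullDist (f g : injectiveHull X) : ℝ :=
  sSup (Set.range fun x => |f.1 x - g.1 x|)

lemma hullDist_bddAbove (f g : injectiveHull X) :
    BddAbove (Set.range fun x => |f.1 x - g.1 x|) := by
  rcases isEmpty_or_nonempty X with hX | hX
  · rw [Set.range_eq_empty]
    exact bddAbove_empty
  · obtain ⟨x₀⟩ := hX
    exact ⟨f.1 x₀ + g.1 x₀, by rintro r ⟨y, rfl⟩; exact dist_bound f.2 g.2 y x₀⟩

lemma le_hullDist (f g : injectiveHull X) (x : X) :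
    |f.1 x - g.1 x| ≤ hullDist f g :=
  le_csSup (hullDist_bddAbove f g) ⟨x, rfl⟩

lemma hullDist_nonneg (f g : injectiveHull X) : 0 ≤ hullDist f g :=
  Real.sSup_nonneg (by rintro r ⟨y, rfl⟩; exact abs_nonneg _)

lemma hullDist_self (f : injectiveHull X) : hullDist f f = 0 := by
  unfold hullDist
  rcases isEmpty_or_nonempty X with hX | hX
  · rw [Set.range_eq_empty, Real.sSup_empty]
  · have h : (Set.range fun x : X => |f.1 x - f.1 x|) = {0} := by
      simp [sub_self]
    rw [h, csSup_singleton]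

lemma hullDist_comm (f g : injectiveHull X) : hullDist f g = hullDist g f := by
  unfold hullDist
  have h : (fun x : X => |f.1 x - g.1 x|) = fun x : X => |g.1 x - f.1 x| := by
    funext x
    exact abs_sub_comm _ _
  rw [h]

lemma hullDist_triangle (f g h : injectiveHull X) :
    hullDist f h ≤ hullDist f g + hullDist g h := by
  apply Real.sSup_le
  · rintro r ⟨x, rfl⟩
    calc |f.1 x - h.1 x| ≤ |f.1 x - g.1 x| + |g.1 x - h.1 x| := abs_sub_le _ _ _
    _ ≤ hullDist f g + hullDist g h := add_le_add (le_hullDist f g x) (le_hullDist g h x)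
  · exact add_nonneg (hullDist_nonneg f g) (hullDist_nonneg g h)

lemma hullDist_eq_zero {f g : injectiveHull X} (hfg : hullDist f g = 0) : f = g := by
  apply Subtype.ext
  funext x
  have h1 := le_hullDist f g x
  rw [hfg] at h1
  have h2 := abs_nonneg (f.1 x - g.1 x)
  have h3 : |f.1 x - g.1 x| = 0 := le_antisymm h1 h2
  have h4 := abs_eq_zero.mp h3
  linarith

end InjHull

/-- The metric on the injective hull: `d_∞(f,g) = sup_x |f x - g x|`. -/
noncomputable instance {X : Type u} [MetricSpace X] : MetricSpace (injectiveHull X) where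
  dist := InjHull.hullDist
  dist_self := InjHull.hullDist_self
  dist_comm := InjHull.hullDist_comm
  dist_triangle := InjHull.hullDist_triangle
  eq_of_dist_eq_zero := InjHull.hullDist_eq_zero

/-- The canonical isometric embedding `e : X → E(X)`, `x ↦ d(x, ·)`. -/
noncomputable def toHull {X : Type u} [MetricSpace X] (x : X) : injectiveHull X := by
  refine ⟨fun y => dist x y, ?_, ?_⟩
  · intro y z
    calc dist y z ≤ dist y x + dist x z := dist_triangle y x z
    _ = dist x y + dist x z := by rw [dist_comm y x]
  · intro g hg hle
    have h0 : g x ≤ 0 := by simpa using hle x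
    have h1 : 0 ≤ g x := InjHull.form_nonneg hg x
    have hgx : g x = 0 := le_antisymm h0 h1
    funext z
    have h2 := hg z x
    have h3 : dist x z ≤ g z := by
      rw [dist_comm]
      linarith
    exact le_antisymm (hle z) h3

/-! ### Auxiliary lemmas for the main theorem -/

namespace SCAux

open Metric

variable {X : Type u} [MetricSpace X]

lemma coarseProj_nonempty {A : Set X} (hA : A.Nonempty) (x : X) :
    ∃ p, p ∈ coarseProj A x := by
  obtain ⟨y, hy, hlt⟩ := (Metric.infDist_lt_iff hA).mp (lt_add_one (Metric.infDist x A))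
  exact ⟨y, hy, hlt.le⟩

/-- Two points of a ball disjoint from `A` have `C`-close coarse projections. -/
lemma ball_proj {C : ℝ} {A : Set X} (hSC : IsStronglyContracting C A)
    {x : X} {ρ : ℝ} (hρ : ρ < Metric.infDist x A)
    {u v p q : X} (hu : dist u x ≤ ρ) (hv : dist v x ≤ ρ)
    (hp : p ∈ coarseProj A u) (hq : q ∈ coarseProj A v) : dist p q ≤ C := by
  have hdisj : Disjoint (Metric.closedBall x ρ) A := by
    rw [Set.disjoint_left]
    intro s hs hsA
    have h1 : Metric.infDist x A ≤ dist x s := Metric.infDist_le_dist_of_mem hsA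
    have h2 : dist s x ≤ ρ := Metric.mem_closedBall.mp hs
    rw [dist_comm] at h2
    linarith
  exact hSC x ρ hdisj u (Metric.mem_closedBall.mpr hu) v (Metric.mem_closedBall.mpr hv)
    p hp q hq

/-- A point on a geodesic at parameter `τ`. -/
lemma geo_point (hgeo : IsGeodesicSpace X) (x y : X) {τ : ℝ} (h0 : 0 ≤ τ)
    (hτ : τ ≤ dist x y) : ∃ v : X, dist x v = τ ∧ dist v y = dist x y - τ := by
  obtain ⟨γ, hγ0, hγd, hγiso⟩ := hgeo x y
  refine ⟨γ τ, ?_, ?_⟩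
  · have h := hγiso 0 ⟨le_refl 0, dist_nonneg⟩ τ ⟨h0, hτ⟩
    rw [hγ0] at h
    rw [h, abs_of_nonpos (by linarith)]
    ring
  · have h := hγiso τ ⟨h0, hτ⟩ (dist x y) ⟨dist_nonneg, le_refl _⟩
    rw [hγd] at h
    rw [h, abs_of_nonpos (by linarith)]
    ring

lemma gate_small {C : ℝ} {A : Set X} {x z p : X} (hp : p ∈ coarseProj A x)
    (hsm : Metric.infDist x A ≤ 2*C + 3) :
    dist p z ≤ dist x z - Metric.infDist x A + (4*C + 7) := by
  have h1 : dist x p ≤ Metric.infDist x A + 1 := hp.2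
  have h2 : dist p z ≤ dist p x + dist x z := dist_triangle p x z
  rw [dist_comm p x] at h2
  linarith

/-- **Gate lemma**: the coarse projection of `x` lies, up to an additive constant,
"between" `x` and any point `z ∈ A`. -/
lemma gate_aux {C : ℝ} (hC : 0 ≤ C) (hgeo : IsGeodesicSpace X) {A : Set X}
    (hA : A.Nonempty) (hSC : IsStronglyContracting C A) :
    ∀ n : ℕ, ∀ x z : X, z ∈ A → dist x z ≤ n → ∀ p ∈ coarseProj A x,
      dist p z ≤ dist x z - Metric.infDist x A + (4*C + 7) := by
  intro n
  induction n with
  | zero =>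
    intro x z hz hxz p hp
    apply gate_small hp
    have h1 : Metric.infDist x A ≤ dist x z := Metric.infDist_le_dist_of_mem hz
    have h2 : dist x z ≤ 0 := by exact_mod_cast hxz
    linarith
  | succ m ih =>
    intro x z hz hxz p hp
    by_cases hsm : Metric.infDist x A ≤ 2*C + 3
    · exact gate_small hp hsm
    · push_neg at hsm
      have h0 : Metric.infDist x A ≤ dist x z := Metric.infDist_le_dist_of_mem hz
      obtain ⟨v, hv1, hv2⟩ := geo_point hgeo x z
        (show (0:ℝ) ≤ Metric.infDist x A - 1 by linarith)
        (show Metric.infDist x A - 1 ≤ dist x z by linarith)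
      obtain ⟨p₁, hp₁⟩ := coarseProj_nonempty hA v
      have hpp₁ : dist p p₁ ≤ C := by
        refine ball_proj hSC (x := x) (ρ := Metric.infDist x A - 1) (by linarith)
          ?_ ?_ hp hp₁
        · rw [dist_self]; linarith
        · rw [dist_comm, hv1]
      have hxz' : dist x z ≤ (m : ℝ) + 1 := by exact_mod_cast hxz
      by_cases hsm1 : Metric.infDist v A ≤ 2*C + 3
      · have h1 : dist v p₁ ≤ Metric.infDist v A + 1 := hp₁.2
        have h2 : dist p z ≤ dist p p₁ + dist p₁ z := dist_triangle p p₁ z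
        have h3 : dist p₁ z ≤ dist p₁ v + dist v z := dist_triangle p₁ v z
        rw [dist_comm p₁ v] at h3
        linarith
      · push_neg at hsm1
        have hvz : dist v z ≤ (m : ℝ) := by linarith
        have h4 := ih v z hz hvz p₁ hp₁
        have h2 : dist p z ≤ dist p p₁ + dist p₁ z := dist_triangle p p₁ z
        linarith

lemma gate {C : ℝ} (hC : 0 ≤ C) (hgeo : IsGeodesicSpace X) {A : Set X}
    (hA : A.Nonempty) (hSC : IsStronglyContracting C A)
    (x z : X) (hz : z ∈ A) (p : X) (hp : p ∈ coarseProj A x) :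
    dist p z ≤ dist x z - Metric.infDist x A + (4*C + 7) :=
  gate_aux hC hgeo hA hSC ⌈dist x z⌉₊ x z hz (Nat.le_ceil _) p hp

/-- If the projections of `y` and `w` are far apart, then `d(y,w)` is at least the
sum of the distances to `A` (up to an additive constant). -/
lemma lemG {C : ℝ} (hC : 0 ≤ C) (hgeo : IsGeodesicSpace X) {A : Set X}
    (hA : A.Nonempty) (hSC : IsStronglyContracting C A)
    {y w p q : X} (hp : p ∈ coarseProj A y) (hq : q ∈ coarseProj A w)
    (hpq : 2*C < dist p q) :
    Metric.infDist y A + Metric.infDist w A - 1 ≤ dist y w := by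
  by_cases h1 : dist y w < Metric.infDist y A
  · exfalso
    have h2 : dist p q ≤ C := by
      refine ball_proj hSC (x := y) h1 ?_ ?_ hp hq
      · rw [dist_self]; exact dist_nonneg
      · rw [dist_comm]
    linarith
  push_neg at h1
  by_cases h2 : Metric.infDist y A < 1
  · by_cases h3 : dist y w < Metric.infDist w A
    · exfalso
      have h4 : dist p q ≤ C := by
        refine ball_proj hSC (x := w) h3 ?_ ?_ hp hq
        · exact le_refl _
        · rw [dist_self]; exact dist_nonneg
      linarith
    · push_neg at h3
      linarith
  · push_neg at h2
    obtain ⟨v, hv1, hv2⟩ := geo_point hgeo y w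
      (show (0:ℝ) ≤ Metric.infDist y A - 1 by linarith)
      (show Metric.infDist y A - 1 ≤ dist y w by linarith)
    obtain ⟨pv, hpv⟩ := coarseProj_nonempty hA v
    have hppv : dist p pv ≤ C := by
      refine ball_proj hSC (x := y) (ρ := Metric.infDist y A - 1) (by linarith)
        ?_ ?_ hp hpv
      · rw [dist_self]; linarith
      · rw [dist_comm, hv1]
    by_cases h3 : dist v w < Metric.infDist w A
    · exfalso
      have hpvq : dist pv q ≤ C := by
        refine ball_proj hSC (x := w) h3 ?_ ?_ hpv hq
        · exact le_refl _
        · rw [dist_self]; exact dist_nonneg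
      have h4 : dist p q ≤ dist p pv + dist pv q := dist_triangle p pv q
      linarith
    · push_neg at h3
      linarith

lemma dg_small {C : ℝ} (hC : 0 ≤ C) (hgeo : IsGeodesicSpace X) {A : Set X}
    (hA : A.Nonempty) (hSC : IsStronglyContracting C A)
    {y w p q : X} (hp : p ∈ coarseProj A y) (hq : q ∈ coarseProj A w)
    (hsm : Metric.infDist y A ≤ 2*C + 3) :
    Metric.infDist y A + Metric.infDist w A + dist p q - (8*C + 14) ≤ dist y w := by
  have hyp : dist y p ≤ Metric.infDist y A + 1 := hp.2
  have hg := gate hC hgeo hA hSC w p hp.1 q hq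
  have h2 : dist p w ≤ dist p y + dist y w := dist_triangle p y w
  rw [dist_comm q p, dist_comm w p] at hg
  rw [dist_comm p y] at h2
  linarith

/-- **Double gate lemma**: either the projections of `y` and `w` are boundedly close,
or `d(y,w)` exceeds `d(y,A) + d(w,A) + d(π y, π w)` up to an additive constant. -/
lemma dg_aux {C : ℝ} (hC : 0 ≤ C) (hgeo : IsGeodesicSpace X) {A : Set X}
    (hA : A.Nonempty) (hSC : IsStronglyContracting C A) :
    ∀ n : ℕ, ∀ y w : X, dist y w ≤ n → ∀ p ∈ coarseProj A y, ∀ q ∈ coarseProj A w,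
      dist p q ≤ 4*C + 2 ∨
      Metric.infDist y A + Metric.infDist w A + dist p q - (8*C + 14) ≤ dist y w := by
  intro n
  induction n with
  | zero =>
    intro y w hyw p hp q hq
    by_cases h1 : dist y w < Metric.infDist y A
    · left
      have h2 : dist p q ≤ C := by
        refine ball_proj hSC (x := y) h1 ?_ ?_ hp hq
        · rw [dist_self]; exact dist_nonneg
        · rw [dist_comm]
      linarith
    · push_neg at h1
      right
      have h2 : dist y w ≤ 0 := by exact_mod_cast hyw
      exact dg_small hC hgeo hA hSC hp hq (by linarith)
  | succ m ih =>
    intro y w hyw p hp q hq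
    by_cases h1 : dist y w < Metric.infDist y A
    · left
      have h2 : dist p q ≤ C := by
        refine ball_proj hSC (x := y) h1 ?_ ?_ hp hq
        · rw [dist_self]; exact dist_nonneg
        · rw [dist_comm]
      linarith
    · push_neg at h1
      by_cases hsm : Metric.infDist y A ≤ 2*C + 3
      · exact Or.inr (dg_small hC hgeo hA hSC hp hq hsm)
      · push_neg at hsm
        obtain ⟨v, hv1, hv2⟩ := geo_point hgeo y w
          (show (0:ℝ) ≤ Metric.infDist y A - 1 by linarith)
          (show Metric.infDist y A - 1 ≤ dist y w by linarith)
        obtain ⟨p₁, hp₁⟩ := coarseProj_nonempty hA v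
        have hpp₁ : dist p p₁ ≤ C := by
          refine ball_proj hSC (x := y) (ρ := Metric.infDist y A - 1) (by linarith)
            ?_ ?_ hp hp₁
          · rw [dist_self]; linarith
          · rw [dist_comm, hv1]
        have hyw' : dist y w ≤ (m : ℝ) + 1 := by exact_mod_cast hyw
        have hvw : dist v w ≤ (m : ℝ) := by linarith
        rcases ih v w hvw p₁ hp₁ q hq with hcase | hcase
        · by_cases hpq : dist p q ≤ 4*C + 2
          · exact Or.inl hpq
          · push_neg at hpq
            right
            have hG := lemG hC hgeo hA hSC hp hq (by linarith : 2*C < dist p q)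
            have h5 : dist p q ≤ dist p p₁ + dist p₁ q := dist_triangle p p₁ q
            linarith
        · right
          have tri2 : dist p q ≤ dist p p₁ + dist p₁ q := dist_triangle p p₁ q
          by_cases hv3 : Metric.infDist v A < C + 1
          · have hvp₁ : dist v p₁ ≤ Metric.infDist v A + 1 := hp₁.2
            have hg := gate hC hgeo hA hSC w p₁ hp₁.1 q hq
            have tri1 : dist p₁ w ≤ dist p₁ v + dist v w := dist_triangle p₁ v w
            rw [dist_comm q p₁, dist_comm w p₁] at hg
            rw [dist_comm p₁ v] at tri1
            linarith
          · push_neg at hv3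
            linarith

lemma dg {C : ℝ} (hC : 0 ≤ C) (hgeo : IsGeodesicSpace X) {A : Set X}
    (hA : A.Nonempty) (hSC : IsStronglyContracting C A)
    (y w : X) {p q : X} (hp : p ∈ coarseProj A y) (hq : q ∈ coarseProj A w) :
    dist p q ≤ 4*C + 2 ∨
    Metric.infDist y A + Metric.infDist w A + dist p q - (8*C + 14) ≤ dist y w :=
  dg_aux hC hgeo hA hSC ⌈dist y w⌉₊ y w (Nat.le_ceil _) p hp q hq

end SCAux

namespace SCAux

variable {X : Type u} [MetricSpace X]

/-- Distance from a point of the hull to an embedded point: `d(f, e z) = f z`. -/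
lemma dist_toHull_eval (f : injectiveHull X) (z : X) :
    dist f (toHull z) = f.1 z := by
  have habs : ∀ x : X, |f.1 x - (toHull z).1 x| ≤ f.1 z := by
    intro x
    have h1 : f.1 x ≤ dist x z + f.1 z := InjHull.le_dist_add f.2 x z
    have h2 : dist z x ≤ f.1 z + f.1 x := f.2.1 z x
    have h3 : (toHull z).1 x = dist z x := rfl
    have h4 : dist x z = dist z x := dist_comm x z
    rw [h3, abs_sub_le_iff]
    constructor
    · linarith
    · linarith
  apply le_antisymm
  · exact Real.sSup_le (by rintro d ⟨x, rfl⟩; exact habs x) (InjHull.form_nonneg f.2.1 z)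
  · have h := InjHull.le_hullDist f (toHull z) z
    have h0 : (toHull z).1 z = 0 := dist_self z
    rw [h0, sub_zero, abs_of_nonneg (InjHull.form_nonneg f.2.1 z)] at h
    exact h

/-- `toHull` is an isometric embedding. -/
lemma dist_toHull_both (x y : X) :
    dist (toHull x : injectiveHull X) (toHull y) = dist x y := by
  rw [dist_toHull_eval]
  rfl

lemma infDist_hull_le {A : Set X} (f : injectiveHull X) {u : X} (hu : u ∈ A) :
    Metric.infDist f ((toHull : X → injectiveHull X) '' A) ≤ f.1 u := by
  have h := Metric.infDist_le_dist_of_mem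
    (show (toHull u : injectiveHull X) ∈ (toHull : X → injectiveHull X) '' A from
      ⟨u, hu, rfl⟩) (x := f)
  rwa [dist_toHull_eval] at h

/-- **Main estimate**: near-minimizers on `A` of two hull points that are closer to
each other than the first one is to `e(A)` lie at uniformly bounded distance. -/
lemma main_pair {C : ℝ} (hC : 0 ≤ C) (hgeo : IsGeodesicSpace X) {A : Set X}
    (hA : A.Nonempty) (hSC : IsStronglyContracting C A) (h4 : Gromov4 C A)
    (f₀ f : injectiveHull X) (r : ℝ)
    (hdist : dist f₀ f ≤ r)
    (hrm : r ≤ Metric.infDist f₀ ((toHull : X → injectiveHull X) '' A))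
    {a b : X} (ha : a ∈ A) (hb : b ∈ A)
    (hfa : f₀.1 a ≤ Metric.infDist f₀ ((toHull : X → injectiveHull X) '' A) + 1)
    (hfb : f.1 b ≤ Metric.infDist f ((toHull : X → injectiveHull X) '' A) + 1) :
    dist a b ≤ 60*C + 100 := by
  set m := Metric.infDist f₀ ((toHull : X → injectiveHull X) '' A) with hm
  set μ := Metric.infDist f ((toHull : X → injectiveHull X) '' A) with hμ
  have hkey₀ : ∀ u ∈ A, m ≤ f₀.1 u := fun u hu => infDist_hull_le f₀ hu
  have hkey₁ : ∀ u ∈ A, μ ≤ f.1 u := fun u hu => infDist_hull_le f hu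
  have heval : ∀ x : X, |f₀.1 x - f.1 x| ≤ r :=
    fun x => (InjHull.le_hullDist f₀ f x).trans hdist
  set t := dist a b with ht
  have ht0 : 0 ≤ t := dist_nonneg
  -- midpoint of a geodesic from a to b, and a chain point z ∈ A near it
  obtain ⟨mid, hmid1, hmid2⟩ := geo_point hgeo a b (τ := t/2) (by linarith) (by linarith)
  obtain ⟨z, hz⟩ := coarseProj_nonempty hA mid
  have hzA : z ∈ A := hz.1
  have hza : dist z a ≤ t/2 + (4*C + 7) := by
    have h := gate hC hgeo hA hSC mid a ha z hz
    have h1 : dist mid a = t/2 := by rw [dist_comm]; exact hmid1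
    have h2 : (0:ℝ) ≤ Metric.infDist mid A := Metric.infDist_nonneg
    linarith
  have hzb : dist z b ≤ t/2 + (4*C + 7) := by
    have h := gate hC hgeo hA hSC mid b hb z hz
    have h2 : (0:ℝ) ≤ Metric.infDist mid A := Metric.infDist_nonneg
    rw [hmid2] at h
    linarith
  -- 4-point estimate towards the chain point z
  have mid4 : ∀ q ∈ A, dist q z + t/2 ≤ max (dist q a) (dist q b) + (5*C + 7) := by
    intro q hq
    have h4i := h4 q hq z hzA a ha b hb
    have hmax : max (dist q b + dist a z) (dist q a + dist z b)
        ≤ max (dist q a) (dist q b) + (t/2 + (4*C + 7)) := by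
      apply max_le
      · have h5 : dist q b ≤ max (dist q a) (dist q b) := le_max_right _ _
        have h6 : dist a z = dist z a := dist_comm a z
        linarith
      · have h5 : dist q a ≤ max (dist q a) (dist q b) := le_max_left _ _
        linarith
    linarith
  -- witnesses for f₀ and f at z, and their projections
  obtain ⟨w₀, hw₀⟩ := InjHull.exists_near f₀.2 z (show (0:ℝ) < 1 by norm_num)
  obtain ⟨w₁, hw₁⟩ := InjHull.exists_near f.2 z (show (0:ℝ) < 1 by norm_num)
  obtain ⟨q₀, hq₀⟩ := coarseProj_nonempty hA w₀
  obtain ⟨q₁, hq₁⟩ := coarseProj_nonempty hA w₁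
  have hg₀a : dist q₀ a ≤ dist w₀ a - Metric.infDist w₀ A + (4*C + 7) :=
    gate hC hgeo hA hSC w₀ a ha q₀ hq₀
  have hg₀b : dist q₀ b ≤ dist w₀ b - Metric.infDist w₀ A + (4*C + 7) :=
    gate hC hgeo hA hSC w₀ b hb q₀ hq₀
  have hg₁a : dist q₁ a ≤ dist w₁ a - Metric.infDist w₁ A + (4*C + 7) :=
    gate hC hgeo hA hSC w₁ a ha q₁ hq₁
  have hg₁b : dist q₁ b ≤ dist w₁ b - Metric.infDist w₁ A + (4*C + 7) :=
    gate hC hgeo hA hSC w₁ b hb q₁ hq₁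
  have tz₀ : dist z w₀ ≤ dist q₀ z + (Metric.infDist w₀ A + 1) := by
    have l1 : dist z w₀ ≤ dist z q₀ + dist q₀ w₀ := dist_triangle z q₀ w₀
    have l2 : dist z q₀ = dist q₀ z := dist_comm z q₀
    have l3 : dist q₀ w₀ = dist w₀ q₀ := dist_comm q₀ w₀
    have l4 : dist w₀ q₀ ≤ Metric.infDist w₀ A + 1 := hq₀.2
    linarith
  have tz₁ : dist z w₁ ≤ dist q₁ z + (Metric.infDist w₁ A + 1) := by
    have l1 : dist z w₁ ≤ dist z q₁ + dist q₁ w₁ := dist_triangle z q₁ w₁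
    have l2 : dist z q₁ = dist q₁ z := dist_comm z q₁
    have l3 : dist q₁ w₁ = dist w₁ q₁ := dist_comm q₁ w₁
    have l4 : dist w₁ q₁ ≤ Metric.infDist w₁ A + 1 := hq₁.2
    linarith
  have e₀a : dist w₀ a ≤ f₀.1 w₀ + f₀.1 a := f₀.2.1 w₀ a
  have e₀b : dist w₀ b ≤ f₀.1 w₀ + f₀.1 b := f₀.2.1 w₀ b
  have e₁a : dist w₁ a ≤ f.1 w₁ + f.1 a := f.2.1 w₁ a
  have e₁b : dist w₁ b ≤ f.1 w₁ + f.1 b := f.2.1 w₁ b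
  have hfzm : m ≤ f₀.1 z := hkey₀ z hzA
  have hfzμ : μ ≤ f.1 z := hkey₁ z hzA
  have hf₀b : f₀.1 b ≤ μ + 1 + r := by
    have := (abs_le.mp (heval b)).2
    linarith
  have hfa' : f.1 a ≤ m + 1 + r := by
    have := (abs_le.mp (heval a)).1
    linarith
  have m4₀ := mid4 q₀ hq₀.1
  have m4₁ := mid4 q₁ hq₁.1
  -- Case analysis
  rcases le_or_gt (dist q₀ b) (dist q₀ a) with hc₀ | hc₀
  · -- q₀ on the b-side of the midpoint: f₀-route through a
    rw [max_eq_left hc₀] at m4₀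
    linarith
  rcases le_or_gt (dist q₁ a) (dist q₁ b) with hc₁ | hc₁
  · -- q₁ on the a-side of the midpoint: f-route through b
    rw [max_eq_right hc₁] at m4₁
    linarith
  -- now dist q₀ a < dist q₀ b and dist q₁ b < dist q₁ a
  rw [max_eq_right hc₀.le] at m4₀
  rw [max_eq_left hc₁.le] at m4₁
  have h4d := h4 q₀ hq₀.1 b hb q₁ hq₁.1 a ha
  by_cases h6 : dist q₀ b + dist q₁ a ≤ dist q₀ a + dist q₁ b + C
  · -- both projections are close to the midpoint
    linarith
  · push_neg at h6
    have h6b : dist q₀ b + dist q₁ a ≤ dist q₀ q₁ + t + C := by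
      have hba : dist b a = t := by rw [dist_comm]
      rcases le_total (dist q₀ a + dist q₁ b) (dist q₀ q₁ + dist b a) with hle | hle
      · rw [max_eq_right hle, hba] at h4d; exact h4d
      · rw [max_eq_left hle] at h4d; linarith
    by_cases h7 : dist q₀ q₁ ≤ 4*C + 2
    · -- projections of the two witnesses are close: both near the midpoint
      have e1 : dist q₁ a ≤ dist q₁ q₀ + dist q₀ a := dist_triangle q₁ q₀ a
      have e2 : dist q₀ b ≤ dist q₀ q₁ + dist q₁ b := dist_triangle q₀ q₁ b
      have e3 : dist q₁ q₀ = dist q₀ q₁ := dist_comm q₁ q₀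
      -- hence dist q₁ a ≤ dist q₁ b + (8C+4), use the f-route through b
      linarith
    · push_neg at h7
      rcases dg hC hgeo hA hSC w₀ w₁ hq₀ hq₁ with hd | hd
      · linarith
      · -- double-gate estimate: forces μ + m ≤ r + const
        have formw : dist w₀ w₁ ≤ f₀.1 w₀ + f₀.1 w₁ := f₀.2.1 w₀ w₁
        have hw1r : f₀.1 w₁ ≤ f.1 w₁ + r := by
          have := (abs_le.mp (heval w₁)).2
          linarith
        -- assemble everything
        linarith

end SCAux

/-- Strongly contracting (hyperbolic) subsets stay strongly contracting in the
injective hull: for all `C ≥ 0` there is `D ≥ 0` such that for every geodesic metric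
space `X` and every `C`-strongly contracting subset `A ⊆ X` satisfying Gromov's
4-point condition with constant `C`, the set `e(A)` is `D`-strongly contracting
in `E(X)`. -/
theorem contracting_survives_in_hull (C : ℝ) (hC : 0 ≤ C) :
    ∃ D : ℝ, 0 ≤ D ∧
      ∀ (X : Type u) [MetricSpace X], IsGeodesicSpace X →
        ∀ A : Set X, IsStronglyContracting C A → Gromov4 C A →
          IsStronglyContracting D ((toHull : X → injectiveHull X) '' A) := by
  refine ⟨120*C + 200, by linarith, ?_⟩
  intro X _inst hgeo A hSC h4
  intro f₀ r hdisj x₁ hx₁ x₂ hx₂ y₁ hy₁ y₂ hy₂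
  obtain ⟨⟨b₁, hb₁A, rfl⟩, hy₁d⟩ := hy₁
  obtain ⟨⟨b₂, hb₂A, rfl⟩, hy₂d⟩ := hy₂
  have hA : A.Nonempty := ⟨b₁, hb₁A⟩
  have hne : ((toHull : X → injectiveHull X) '' A).Nonempty :=
    ⟨toHull b₁, b₁, hb₁A, rfl⟩
  have hr0 : 0 ≤ r := le_trans dist_nonneg (Metric.mem_closedBall.mp hx₁)
  have hrm : r ≤ Metric.infDist f₀ ((toHull : X → injectiveHull X) '' A) := by
    by_contra hcon
    push_neg at hcon
    obtain ⟨g, hg, hglt⟩ := (Metric.infDist_lt_iff hne).mp hcon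
    have hmem : g ∈ Metric.closedBall f₀ r := by
      rw [Metric.mem_closedBall, dist_comm]
      exact hglt.le
    exact (Set.disjoint_left.mp hdisj hmem) hg
  -- choose a near-minimizer a ∈ A for the center f₀
  obtain ⟨g, hgmem, hglt⟩ := (Metric.infDist_lt_iff hne).mp
    (lt_add_one (Metric.infDist f₀ ((toHull : X → injectiveHull X) '' A)))
  obtain ⟨a, haA, rfl⟩ := hgmem
  have hfa : f₀.1 a ≤ Metric.infDist f₀ ((toHull : X → injectiveHull X) '' A) + 1 := by
    rw [← SCAux.dist_toHull_eval]
    exact hglt.le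
  have hfb₁ : x₁.1 b₁ ≤ Metric.infDist x₁ ((toHull : X → injectiveHull X) '' A) + 1 := by
    rw [← SCAux.dist_toHull_eval]
    exact hy₁d
  have hfb₂ : x₂.1 b₂ ≤ Metric.infDist x₂ ((toHull : X → injectiveHull X) '' A) + 1 := by
    rw [← SCAux.dist_toHull_eval]
    exact hy₂d
  have hd₁ : dist f₀ x₁ ≤ r := by
    rw [dist_comm]
    exact Metric.mem_closedBall.mp hx₁
  have hd₂ : dist f₀ x₂ ≤ r := by
    rw [dist_comm]
    exact Metric.mem_closedBall.mp hx₂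
  have h1 := SCAux.main_pair hC hgeo hA hSC h4 f₀ x₁ r hd₁ hrm haA hb₁A hfa hfb₁
  have h2 := SCAux.main_pair hC hgeo hA hSC h4 f₀ x₂ r hd₂ hrm haA hb₂A hfa hfb₂
  rw [SCAux.dist_toHull_both]
  have h3 : dist b₁ b₂ ≤ dist b₁ a + dist a b₂ := dist_triangle b₁ a b₂
  have h4' : dist b₁ a = dist a b₁ := dist_comm b₁ a
  linarith
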